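/- Let n be a natural number and let ℓ be any complex number. Then ∑_{k=0}^{n} (-1/2)^k · C(n+ℓ, n-k) · C(2k+2ℓ, k) equals 2^{-n} · C(n+ℓ, n/2) if n is even, and equals 0 if n is odd. (Here binom(n+ℓ, k+ℓ) is interpreted via its codegree as C(n+ℓ, n-k).) -/

import Mathlib

/-!
Both sides, as functions of `n`, satisfy the same second-order recurrence
`(n+2)(n+2+2ℓ) u(n+2) = (n+2+ℓ)(n+1+ℓ) u(n)`. For the sum this is a creative-telescoping
argument (Zeilberger's certificate is `G(k) = -k(k+2ℓ) · term(n+2, k)`); for the right-hand side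
it is a direct computation. The recurrence determines `u(n+2)` except at `ℓ = -(n+2)/2`, a point
that is removed by continuity in `ℓ`.
-/

/-- Generalized binomial coefficient `C(z, m) = (∏_{j=0}^{m-1} (z - j)) / m!` for complex `z`. -/
noncomputable def cbinom (z : ℂ) (m : ℕ) : ℂ :=
  (∏ j ∈ Finset.range m, (z - j)) / (Nat.factorial m)

open Finset

lemma cbinom_succ_mul (z : ℂ) (m : ℕ) : cbinom z (m + 1) * (m + 1) = cbinom z m * (z - m) := by
  have hm : (m.factorial : ℂ) ≠ 0 := Nat.cast_ne_zero.2 m.factorial_ne_zero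
  unfold cbinom
  rw [prod_range_succ, Nat.factorial_succ]
  push_cast
  field_simp

lemma cbinom_add_one_mul (z : ℂ) (m : ℕ) :
    cbinom (z + 1) m * (z + 1 - m) = (z + 1) * cbinom z m := by
  have hprod : (∏ j ∈ range m, (z + 1 - j)) * (z + 1 - m) = (z + 1) * ∏ j ∈ range m, (z - j) := by
    rw [← prod_range_succ (fun j : ℕ => z + 1 - j), prod_range_succ']
    push_cast
    simp only [add_sub_add_right_eq_sub, sub_zero]
    ring
  unfold cbinom
  rw [div_mul_eq_mul_div, hprod, mul_div_assoc]

lemma cbinom_succ_succ_mul (z : ℂ) (m : ℕ) :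
    cbinom (z + 1) (m + 1) * (m + 1) = (z + 1) * cbinom z m := by
  rw [cbinom_succ_mul, cbinom_add_one_mul]

@[fun_prop]
lemma Continuous.cbinom {X : Type*} [TopologicalSpace X] {f : X → ℂ} (hf : Continuous f) (m : ℕ) :
    Continuous fun x => cbinom (f x) m := by
  unfold _root_.cbinom
  fun_prop

namespace ReedDawson

noncomputable def term (ℓ : ℂ) (n k : ℕ) : ℂ :=
  (-(1/2) : ℂ) ^ k * cbinom ((n : ℂ) + ℓ) (n - k) * cbinom (2 * (k : ℂ) + 2 * ℓ) k

noncomputable def lhs (ℓ : ℂ) (n : ℕ) : ℂ := ∑ k ∈ range (n + 1), term ℓ n k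

noncomputable def rhs (ℓ : ℂ) (n : ℕ) : ℂ :=
  if Even n then (2 : ℂ)⁻¹ ^ n * cbinom ((n : ℂ) + ℓ) (n / 2) else 0

lemma mul_term_add_two (ℓ : ℂ) {n k : ℕ} (hk : k ≤ n) :
    ((n : ℂ) + 2 - k) * ((n : ℂ) + 1 - k) * term ℓ (n + 2) k
      = ((n : ℂ) + 2 + ℓ) * ((n : ℂ) + 1 + ℓ) * term ℓ n k := by
  obtain ⟨m, rfl⟩ := Nat.exists_eq_add_of_le hk
  have h2 := cbinom_succ_succ_mul ((k + m : ℕ) + ℓ + 1) (m + 1)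
  have h1 := cbinom_succ_succ_mul ((k + m : ℕ) + ℓ) m
  rw [term, term, show k + m + 2 - k = m + 1 + 1 by omega, show k + m - k = m by omega,
    show ((k + m + 2 : ℕ) : ℂ) + ℓ = (k + m : ℕ) + ℓ + 1 + 1 by push_cast; ring]
  push_cast at h1 h2 ⊢
  linear_combination (-(1/2) : ℂ) ^ k * cbinom (2 * k + 2 * ℓ) k *
    (((m : ℂ) + 1) * h2 + ((k : ℂ) + m + ℓ + 2) * h1)

lemma mul_term_succ (ℓ : ℂ) {m k : ℕ} (hk : k < m) :
    ((k : ℂ) + 1) * ((k : ℂ) + 1 + 2 * ℓ) * term ℓ m (k + 1)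
      = -(((m : ℂ) - k) * (2 * k + 2 * ℓ + 1)) * term ℓ m k := by
  obtain ⟨j, rfl⟩ := Nat.exists_eq_add_of_lt hk
  have h1 := cbinom_succ_mul ((k : ℂ) + j + 1 + ℓ) j
  have h2 := cbinom_succ_succ_mul (2 * k + 2 * ℓ + 1) k
  have h3 := cbinom_add_one_mul (2 * k + 2 * ℓ) k
  rw [term, term, show k + j + 1 - (k + 1) = j by omega, show k + j + 1 - k = j + 1 by omega,
    show 2 * ((k + 1 : ℕ) : ℂ) + 2 * ℓ = 2 * k + 2 * ℓ + 1 + 1 by push_cast; ring]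
  push_cast
  linear_combination (-(1/2) : ℂ) ^ k * (
    (-(1/2) : ℂ) * ((k : ℂ) + 1 + 2 * ℓ) * cbinom ((k : ℂ) + j + 1 + ℓ) j * h2
    - ((k : ℂ) + 1 + ℓ) * cbinom ((k : ℂ) + j + 1 + ℓ) j * h3
    + (2 * k + 2 * ℓ + 1) * cbinom (2 * k + 2 * ℓ) k * h1)

lemma sum_mul_term_add_two (ℓ : ℂ) (n : ℕ) :
    ∑ k ∈ range (n + 2 + 1), ((n : ℂ) + 2 - k) * ((n : ℂ) + 1 - k) * term ℓ (n + 2) k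
      = ((n : ℂ) + 2 + ℓ) * ((n : ℂ) + 1 + ℓ) * lhs ℓ n := by
  rw [sum_range_succ, sum_range_succ, lhs, mul_sum]
  simp only [Nat.cast_add, Nat.cast_one, Nat.cast_ofNat, sub_self, mul_zero, zero_mul, add_zero]
  exact sum_congr rfl fun k hk => mul_term_add_two ℓ (Nat.lt_succ_iff.mp (mem_range.mp hk))

lemma sum_sub_mul_term_add_two_eq_zero (ℓ : ℂ) (n : ℕ) :
    ∑ k ∈ range (n + 2 + 1),
      (((n : ℂ) + 2) * ((n : ℂ) + 2 + 2 * ℓ) - ((n : ℂ) + 2 - k) * ((n : ℂ) + 1 - k)) *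
        term ℓ (n + 2) k = 0 := by
  set G : ℕ → ℂ := fun k => -((k : ℂ) * (k + 2 * ℓ)) * term ℓ (n + 2) k
  have hstep : ∀ k ∈ range (n + 2),
      (((n : ℂ) + 2) * ((n : ℂ) + 2 + 2 * ℓ) - ((n : ℂ) + 2 - k) * ((n : ℂ) + 1 - k)) *
        term ℓ (n + 2) k = G (k + 1) - G k := by
    intro k hk
    have h := mul_term_succ ℓ (mem_range.mp hk)
    simp only [G]
    push_cast at h ⊢
    linear_combination h
  rw [sum_range_succ, sum_congr rfl hstep, sum_range_sub]
  simp only [G]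
  push_cast
  ring

lemma lhs_add_two (ℓ : ℂ) (n : ℕ) :
    ((n : ℂ) + 2) * ((n : ℂ) + 2 + 2 * ℓ) * lhs ℓ (n + 2)
      = ((n : ℂ) + 2 + ℓ) * ((n : ℂ) + 1 + ℓ) * lhs ℓ n := by
  rw [← sum_mul_term_add_two, ← sub_eq_zero, lhs, mul_sum, ← sum_sub_distrib]
  simpa only [sub_mul] using sum_sub_mul_term_add_two_eq_zero ℓ n

lemma rhs_add_two (ℓ : ℂ) (n : ℕ) :
    ((n : ℂ) + 2) * ((n : ℂ) + 2 + 2 * ℓ) * rhs ℓ (n + 2)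
      = ((n : ℂ) + 2 + ℓ) * ((n : ℂ) + 1 + ℓ) * rhs ℓ n := by
  rcases Nat.even_or_odd n with ⟨m, rfl⟩ | hodd
  · have heven : Even (m + m) := ⟨m, rfl⟩
    have h2 := cbinom_succ_succ_mul ((m : ℂ) + m + ℓ + 1) m
    have h1 := cbinom_add_one_mul ((m : ℂ) + m + ℓ) m
    rw [rhs, rhs, if_pos (heven.add even_two), if_pos heven, show (m + m + 2) / 2 = m + 1 by omega,
      show (m + m) / 2 = m by omega,
      show ((m + m + 2 : ℕ) : ℂ) + ℓ = (m : ℂ) + m + ℓ + 1 + 1 by push_cast; ring, pow_add]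
    push_cast
    linear_combination (2 : ℂ)⁻¹ ^ (m + m) *
      ((m + 1 + ℓ) * h2 + ((m : ℂ) + m + ℓ + 2) * h1)
  · rw [rhs, rhs, if_neg (Nat.not_even_iff_odd.mpr hodd),
      if_neg (Nat.not_even_iff_odd.mpr (hodd.add_even even_two)), mul_zero, mul_zero]

lemma continuous_lhs (n : ℕ) : Continuous fun ℓ => lhs ℓ n := by
  unfold lhs term
  fun_prop

lemma continuous_rhs (n : ℕ) : Continuous fun ℓ => rhs ℓ n := by
  unfold rhs
  split_ifs <;> fun_prop

lemma lhs_eq_rhs (n : ℕ) (ℓ : ℂ) : lhs ℓ n = rhs ℓ n := by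
  induction n using Nat.twoStepInduction generalizing ℓ with
  | zero => simp [lhs, term, rhs, cbinom]
  | one => simp [lhs, term, rhs, cbinom, sum_range_succ]; ring
  | more n ih _ =>
    have hgeneric : ∀ ℓ ∈ ({-((n : ℂ) + 2) / 2} : Set ℂ)ᶜ, lhs ℓ (n + 2) = rhs ℓ (n + 2) := by
      intro ℓ hℓ
      have hn : (n : ℂ) + 2 ≠ 0 := by exact_mod_cast (n + 1).succ_ne_zero
      have hℓ' : (n : ℂ) + 2 + 2 * ℓ ≠ 0 := fun h => hℓ (by
        rw [Set.mem_singleton_iff]; linear_combination h / 2)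
      refine mul_left_cancel₀ (mul_ne_zero hn hℓ') ?_
      rw [lhs_add_two, rhs_add_two, ih]
    exact congrFun ((continuous_lhs _).ext_on (dense_compl_singleton _) (continuous_rhs _)
      hgeneric) ℓ

end ReedDawson

theorem stmt_0 (n : ℕ) (ℓ : ℂ) :
    ∑ k ∈ Finset.range (n + 1),
      (-(1/2) : ℂ) ^ k * cbinom ((n : ℂ) + ℓ) (n - k) * cbinom (2 * (k : ℂ) + 2 * ℓ) k
    = if Even n then (2 : ℂ)⁻¹ ^ n * cbinom ((n : ℂ) + ℓ) (n / 2) else 0 := by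
  exact ReedDawson.lhs_eq_rhs n ℓ
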